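/- Let C be a triangulated category and let X, Y be Σ-stable full additive subcategories closed under direct summands. Suppose: (a) X is contravariantly finite and Y is covariantly finite; (b) every object M admits an X-resolution that is Hom(-,Y)-exact; (c) every object N admits a Y-coresolution that is Hom(X,-)-exact. Then ξ_X = ξ^Y, i.e. a distinguished triangle is Hom(X,-)-exact if and only if it is Hom(-,Y)-exact. -/

import Mathlib

/-!
A distinguished triangle `A ⟶ B ⟶ D ⟶ A⟦1⟧` is Hom(X,-)-exact iff its third morphism is an
X-ghost, and (Y being stable under `⟦±1⟧`) Hom(-,Y)-exact iff its third morphism is a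
Y-coghost, so it suffices that X-ghosts and Y-coghosts coincide. An X-ghost `φ : M ⟶ N` kills
the first step `X₀ ⟶ M` of an X-resolution of `M`, hence factors through the third morphism of
that triangle, a Y-coghost. Dually, a Y-coghost `φ : M ⟶ N` kills `N ⟶ Y₀`, so `φ⟦1⟧` factors
through the third morphism of the first triangle of a Y-coresolution of `N`, an X-ghost.
-/

open CategoryTheory CategoryTheory.Limits CategoryTheory.Pretriangulated

variable {C : Type*} [Category C] [Preadditive C] [HasZeroObject C] [HasShift C ℤ]
  [∀ n : ℤ, (shiftFunctor C n).Additive] [Pretriangulated C] [HasBinaryBiproducts C]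

section

variable {C : Type*} [Category C] [HasShift C ℤ]

lemma shift_neg_one_mem {Y : Set C} (hYshift : ∀ A : C, A ∈ Y ↔ (A⟦(1 : ℤ)⟧) ∈ Y)
    (hYsummand : ∀ (P Q : C), Q ∈ Y → ∀ (s : P ⟶ Q) (r : Q ⟶ P), s ≫ r = 𝟙 P → P ∈ Y)
    {A : C} (hA : A ∈ Y) : A⟦(-1 : ℤ)⟧ ∈ Y := by
  let e : A⟦(-1 : ℤ)⟧⟦(1 : ℤ)⟧ ≅ A := (shiftFunctorCompIsoId C (-1 : ℤ) 1 (by simp)).app A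
  exact (hYshift _).2 (hYsummand _ _ hA e.hom e.inv e.hom_inv_id)

variable [Preadditive C] [HasZeroObject C] [∀ n : ℤ, (shiftFunctor C n).Additive]
  [Pretriangulated C]

def IsGhost (X : Set C) {M N : C} (φ : M ⟶ N) : Prop :=
  ∀ X' ∈ X, ∀ w : X' ⟶ M, w ≫ φ = 0

def IsCoghost (Y : Set C) {M N : C} (φ : M ⟶ N) : Prop :=
  ∀ Y' ∈ Y, ∀ v : N ⟶ Y', φ ≫ v = 0

lemma Triangle.yoneda_exact₁ {T : Triangle C} (hT : T ∈ distTriang C) {Z : C} (v : T.obj₁ ⟶ Z)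
    (hv : T.mor₃ ≫ v⟦(1 : ℤ)⟧' = 0) : ∃ u : T.obj₂ ⟶ Z, v = T.mor₁ ≫ u := by
  obtain ⟨g, hg⟩ := Triangle.yoneda_exact₂ _ (rot_of_distTriang _ (rot_of_distTriang _ hT)) _ hv
  obtain ⟨u, rfl⟩ : ∃ u : T.obj₂ ⟶ Z, u⟦(1 : ℤ)⟧' = g := Functor.map_surjective _ g
  refine ⟨-u, (shiftFunctor C (1 : ℤ)).map_injective ?_⟩
  simp only [Functor.map_comp, Functor.map_neg, Preadditive.comp_neg]
  exact hg.trans (Preadditive.neg_comp _ _)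

variable {X Y : Set C} {T : Triangle C}

lemma surjective_comp_mor₂_iff_isGhost_mor₃ (hT : T ∈ distTriang C) :
    (∀ X' ∈ X, Function.Surjective (fun u : X' ⟶ T.obj₂ => u ≫ T.mor₂)) ↔ IsGhost X T.mor₃ := by
  refine ⟨fun h X' hX' w => ?_, fun h X' hX' w => ?_⟩
  · obtain ⟨u, rfl⟩ := h X' hX' w
    rw [Category.assoc, comp_distTriang_mor_zero₂₃ _ hT, comp_zero]
  · obtain ⟨u, hu⟩ := Triangle.coyoneda_exact₃ _ hT w (h X' hX' w)
    exact ⟨u, hu.symm⟩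

lemma surjective_mor₁_comp_iff_isCoghost_mor₃ (hY₁ : ∀ A ∈ Y, A⟦(1 : ℤ)⟧ ∈ Y)
    (hYneg : ∀ A ∈ Y, A⟦(-1 : ℤ)⟧ ∈ Y) (hT : T ∈ distTriang C) :
    (∀ Y' ∈ Y, Function.Surjective (fun u : T.obj₂ ⟶ Y' => T.mor₁ ≫ u)) ↔
      IsCoghost Y T.mor₃ := by
  refine ⟨fun h Y' hY' v => ?_, fun h Y' hY' v => ?_⟩
  · let e : Y'⟦(-1 : ℤ)⟧⟦(1 : ℤ)⟧ ≅ Y' := (shiftFunctorCompIsoId C (-1 : ℤ) 1 (by simp)).app Y'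
    obtain ⟨v₀, hv₀⟩ := (shiftFunctor C (1 : ℤ)).map_surjective (v ≫ e.inv)
    obtain ⟨u, rfl⟩ := h _ (hYneg Y' hY') v₀
    rw [← cancel_mono e.inv, Category.assoc, ← hv₀, Functor.map_comp,
      reassoc_of% comp_distTriang_mor_zero₃₁ T hT, zero_comp, zero_comp]
  · obtain ⟨u, hu⟩ := Triangle.yoneda_exact₁ hT v (h _ (hY₁ Y' hY') _)
    exact ⟨u, hu.symm⟩

lemma IsGhost.isCoghost (hT : T ∈ distTriang C) (hT₂ : T.obj₂ ∈ X) (hT₃ : IsCoghost Y T.mor₃)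
    {N : C} {φ : T.obj₃ ⟶ N} (hφ : IsGhost X φ) : IsCoghost Y φ := by
  intro Y' hY' v
  obtain ⟨b, hb⟩ := Triangle.yoneda_exact₃ _ hT (φ ≫ v)
    (by rw [← Category.assoc, hφ _ hT₂, zero_comp])
  rw [hb, hT₃ _ hY' b]

lemma IsCoghost.isGhost (hX₁ : ∀ A ∈ X, A⟦(1 : ℤ)⟧ ∈ X) (hT : T ∈ distTriang C)
    (hT₂ : T.obj₂ ∈ Y) (hT₃ : IsGhost X T.mor₃) {M : C} {φ : M ⟶ T.obj₁}
    (hφ : IsCoghost Y φ) : IsGhost X φ := by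
  intro X' hX' w
  obtain ⟨g, hg⟩ := Triangle.coyoneda_exact₁ _ hT ((w ≫ φ)⟦(1 : ℤ)⟧')
    (by rw [← Functor.map_comp, Category.assoc, hφ _ hT₂, comp_zero, Functor.map_zero])
  apply (shiftFunctor C (1 : ℤ)).map_injective
  rw [hg, hT₃ _ (hX₁ X' hX') g, Functor.map_zero]

end

theorem stmt_13_general (X Y : Set C)
    (hXshift : ∀ A : C, A ∈ X ↔ (A⟦(1 : ℤ)⟧) ∈ X)
    (hYshift : ∀ A : C, A ∈ Y ↔ (A⟦(1 : ℤ)⟧) ∈ Y)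
    (hYsummand : ∀ (P Q : C), Q ∈ Y → ∀ (s : P ⟶ Q) (r : Q ⟶ P), s ≫ r = 𝟙 P → P ∈ Y)
    -- (b) every object has a Hom(-,Y)-exact X-resolution:
    (hres : ∀ M : C, ∃ (K Xs : ℕ → C) (g : ∀ n, K (n + 1) ⟶ Xs n) (f : ∀ n, Xs n ⟶ K n)
      (h : ∀ n, K n ⟶ (K (n + 1))⟦(1 : ℤ)⟧),
      K 0 = M ∧ (∀ n, Xs n ∈ X) ∧
      ∀ n, Triangle.mk (g n) (f n) (h n) ∈ (distTriang C) ∧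
        (∀ X' ∈ X, Function.Surjective (fun u : X' ⟶ Xs n => u ≫ f n)) ∧
        (∀ Y' ∈ Y, Function.Surjective (fun u : Xs n ⟶ Y' => g n ≫ u)))
    -- (c) every object has a Hom(X,-)-exact Y-coresolution:
    (hcores : ∀ N : C, ∃ (K Ys : ℕ → C) (f : ∀ n, K n ⟶ Ys n) (g : ∀ n, Ys n ⟶ K (n + 1))
      (h : ∀ n, K (n + 1) ⟶ (K n)⟦(1 : ℤ)⟧),
      K 0 = N ∧ (∀ n, Ys n ∈ Y) ∧
      ∀ n, Triangle.mk (f n) (g n) (h n) ∈ (distTriang C) ∧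
        (∀ Y' ∈ Y, Function.Surjective (fun u : Ys n ⟶ Y' => f n ≫ u)) ∧
        (∀ X' ∈ X, Function.Surjective (fun u : X' ⟶ Ys n => u ≫ g n))) :
    ∀ T ∈ (distTriang C),
      ((∀ X' ∈ X, Function.Surjective (fun u : X' ⟶ T.obj₂ => u ≫ T.mor₂)) ↔
       (∀ Y' ∈ Y, Function.Surjective (fun u : T.obj₂ ⟶ Y' => T.mor₁ ≫ u))) := by
  have hY₁ : ∀ A ∈ Y, A⟦(1 : ℤ)⟧ ∈ Y := fun A => (hYshift A).1
  have hYneg : ∀ A ∈ Y, A⟦(-1 : ℤ)⟧ ∈ Y := fun A => shift_neg_one_mem hYshift hYsummand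
  have ghost_iff_coghost : ∀ {M N : C} (φ : M ⟶ N), IsGhost X φ ↔ IsCoghost Y φ := by
    intro M N φ
    constructor
    · obtain ⟨K, Xs, g, f, h, rfl, hXs, hstep⟩ := hres M
      obtain ⟨hT, -, hexact⟩ := hstep 0
      exact IsGhost.isCoghost hT (hXs 0)
        ((surjective_mor₁_comp_iff_isCoghost_mor₃ hY₁ hYneg hT).1 hexact)
    · obtain ⟨K, Ys, f, g, h, rfl, hYs, hstep⟩ := hcores N
      obtain ⟨hT, -, hexact⟩ := hstep 0
      exact IsCoghost.isGhost (fun A => (hXshift A).1) hT (hYs 0)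
        ((surjective_comp_mor₂_iff_isGhost_mor₃ hT).1 hexact)
  intro T hT
  rw [surjective_comp_mor₂_iff_isGhost_mor₃ hT,
    surjective_mor₁_comp_iff_isCoghost_mor₃ hY₁ hYneg hT]
  exact ghost_iff_coghost T.mor₃

theorem stmt_13 (X Y : Set C)
    (hXzero : ∀ Z : C, IsZero Z → Z ∈ X) (hXadd : ∀ A B : C, A ∈ X → B ∈ X → (A ⊞ B) ∈ X)
    (hXshift : ∀ A : C, A ∈ X ↔ (A⟦(1 : ℤ)⟧) ∈ X)
    (hXsummand : ∀ (P Q : C), Q ∈ X → ∀ (s : P ⟶ Q) (r : Q ⟶ P), s ≫ r = 𝟙 P → P ∈ X)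
    (hYzero : ∀ Z : C, IsZero Z → Z ∈ Y) (hYadd : ∀ A B : C, A ∈ Y → B ∈ Y → (A ⊞ B) ∈ Y)
    (hYshift : ∀ A : C, A ∈ Y ↔ (A⟦(1 : ℤ)⟧) ∈ Y)
    (hYsummand : ∀ (P Q : C), Q ∈ Y → ∀ (s : P ⟶ Q) (r : Q ⟶ P), s ≫ r = 𝟙 P → P ∈ Y)
    -- (a) X is contravariantly finite and Y is covariantly finite:
    (hcf : ∀ Z : C, ∃ X' ∈ X, ∃ f : X' ⟶ Z,
      ∀ X'' ∈ X, ∀ u : X'' ⟶ Z, ∃ v : X'' ⟶ X', v ≫ f = u)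
    (hcov : ∀ Z : C, ∃ Y' ∈ Y, ∃ f : Z ⟶ Y',
      ∀ Y'' ∈ Y, ∀ u : Z ⟶ Y'', ∃ v : Y' ⟶ Y'', f ≫ v = u)
    -- (b) every object has a Hom(-,Y)-exact X-resolution:
    (hres : ∀ M : C, ∃ (K Xs : ℕ → C) (g : ∀ n, K (n + 1) ⟶ Xs n) (f : ∀ n, Xs n ⟶ K n)
      (h : ∀ n, K n ⟶ (K (n + 1))⟦(1 : ℤ)⟧),
      K 0 = M ∧ (∀ n, Xs n ∈ X) ∧
      ∀ n, Triangle.mk (g n) (f n) (h n) ∈ (distTriang C) ∧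
        (∀ X' ∈ X, Function.Surjective (fun u : X' ⟶ Xs n => u ≫ f n)) ∧
        (∀ Y' ∈ Y, Function.Surjective (fun u : Xs n ⟶ Y' => g n ≫ u)))
    -- (c) every object has a Hom(X,-)-exact Y-coresolution:
    (hcores : ∀ N : C, ∃ (K Ys : ℕ → C) (f : ∀ n, K n ⟶ Ys n) (g : ∀ n, Ys n ⟶ K (n + 1))
      (h : ∀ n, K (n + 1) ⟶ (K n)⟦(1 : ℤ)⟧),
      K 0 = N ∧ (∀ n, Ys n ∈ Y) ∧
      ∀ n, Triangle.mk (f n) (g n) (h n) ∈ (distTriang C) ∧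
        (∀ Y' ∈ Y, Function.Surjective (fun u : Ys n ⟶ Y' => f n ≫ u)) ∧
        (∀ X' ∈ X, Function.Surjective (fun u : X' ⟶ Ys n => u ≫ g n))) :
    ∀ T ∈ (distTriang C),
      ((∀ X' ∈ X, Function.Surjective (fun u : X' ⟶ T.obj₂ => u ≫ T.mor₂)) ↔
       (∀ Y' ∈ Y, Function.Surjective (fun u : T.obj₂ ⟶ Y' => T.mor₁ ≫ u))) :=
  stmt_13_general X Y hXshift hYshift hYsummand hres hcores
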